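/- If p ∈ ℝ^d is a maximizer (i.e. all entries of p are positive, p_1 = 1, and min_{w ∈ W_d} G(p,w) ≥ min_{w ∈ W_d} G(q,w) for every q in the positive orthant), then there exists k ∈ {2,...,d} with D_k(p) = D_1(p). -/

import Mathlib

def wvec (d : ℕ) (j : Fin d) : Fin d → ℕ :=
  fun i => if i < j then 0 else if i = j then (j : ℕ) + 1 else (i : ℕ)

noncomputable def G (d : ℕ) (p : Fin d → ℝ) (w : Fin d → ℕ) : ℝ :=
  (∏ i, p i) / (Real.sqrt (∑ i, ((w i : ℝ)) ^ 2 * p i ^ 2)) ^ d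

noncomputable def minG (d : ℕ) (p : Fin d → ℝ) : ℝ :=
  ⨅ j : Fin d, G d p (wvec d j)

noncomputable def D (d : ℕ) (j : Fin d) (p : Fin d → ℝ) : ℝ :=
  Real.sqrt (∑ i, ((wvec d j i : ℝ)) ^ 2 * p i ^ 2)

/-- `p*`: `p*_1 = 1`, `p*_2 = 1/√3`, `p*_j = √(2/3)/(j−1)` for `3 ≤ j ≤ d`
(0-based: index `i` has 1-based position `i+1`, so the denominator `j−1` is `i`). -/
noncomputable def pstar (d : ℕ) : Fin d → ℝ :=
  fun i => if (i : ℕ) = 0 then 1 else if (i : ℕ) = 1 then 1 / Real.sqrt 3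
    else Real.sqrt (2 / 3) / ((i : ℕ) : ℝ)

/-! At a maximizer, `D_1` is the largest of the `D_j`: otherwise `G(p, w^(1))` is not the minimum,
and raising `p_1` multiplies every other `G(p, w^(j))` by the same factor (since `w^(j)_1 = 0`)
while keeping `G(p, w^(1))` above the old minimum. If moreover `D_k ≠ D_1` for all `k ≥ 2`,
`G(·, w^(1))` is the only active function, so `p` maximizes it along every coordinate line and
Fermat's rule gives `D_1² = d (w^(1)_m p_m)²` for every `m`. For `m = 1, 2` this says
`p_1² = p_2²`, and then `D_2² = D_1² - p_1² + 3 p_2² > D_1²`, a contradiction. -/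

open Finset Filter Topology Function

lemma eq_of_isLocalMax_mul_div_sqrt_pow {a B C y : ℝ} (n : ℕ) (hB : B ≠ 0)
    (hS : 0 < a * y ^ 2 + C) (h : IsLocalMax (fun x => x * B / √(a * x ^ 2 + C) ^ n) y) :
    a * y ^ 2 + C = n * (a * y ^ 2) := by
  have hs : 0 < √(a * y ^ 2 + C) := Real.sqrt_pos.mpr hS
  have hroot : HasDerivAt (fun x => √(a * x ^ 2 + C)) (a * y / √(a * y ^ 2 + C)) y := by
    convert (((hasDerivAt_pow 2 y).const_mul a).add_const C).sqrt hS.ne' using 1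
    field_simp
    ring
  have hderiv := h.hasDerivAt_eq_zero
    (((hasDerivAt_id y).mul_const B).div (hroot.fun_pow n) (pow_pos hs n).ne')
  rw [← Real.sq_sqrt hS.le]
  generalize √(a * y ^ 2 + C) = s at hs hderiv
  rcases n with _ | k
  · simp [hB] at hderiv
  · field_simp at hderiv
    simp only [id, Nat.add_sub_cancel, mul_zero] at hderiv
    have hkey := (mul_eq_zero.mp hderiv).resolve_left hB
    have hfactor : s ^ k * (s ^ 2 - (k + 1 : ℕ) * (a * y ^ 2)) = 0 := by
      linear_combination hkey
    linear_combination (mul_eq_zero.mp hfactor).resolve_left (pow_pos hs k).ne'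

section

variable {d : ℕ}

lemma wvec_of_lt {i j : Fin d} (h : i < j) : wvec d j i = 0 := by
  simp [wvec, h]

lemma wvec_self (j : Fin d) : wvec d j j = j + 1 := by
  simp [wvec]

lemma wvec_of_gt {i j : Fin d} (h : j < i) : wvec d j i = i := by
  simp [wvec, h.not_gt, h.ne']

lemma minG_le (p : Fin d → ℝ) (j : Fin d) : minG d p ≤ G d p (wvec d j) :=
  ciInf_le (Set.finite_range _).bddBelow j

variable {p : Fin d → ℝ}

lemma D_sq (j : Fin d) : D d j p ^ 2 = ∑ i, (wvec d j i : ℝ) ^ 2 * p i ^ 2 :=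
  Real.sq_sqrt (sum_nonneg fun _ _ => by positivity)

lemma D_succ_sq {j j' : Fin d} (h : (j' : ℕ) = j + 1) :
    D d j' p ^ 2 = D d j p ^ 2 - ((j : ℝ) + 1) ^ 2 * p j ^ 2 + (2 * j + 3) * p j' ^ 2 := by
  have hjj' : j < j' := by rw [Fin.lt_def]; omega
  have hterm : ∀ i, (wvec d j' i : ℝ) ^ 2 * p i ^ 2 = (wvec d j i : ℝ) ^ 2 * p i ^ 2
      - (if i = j then ((j : ℝ) + 1) ^ 2 * p j ^ 2 else 0)
      + (if i = j' then (2 * j + 3) * p j' ^ 2 else 0) := by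
    intro i
    rcases lt_trichotomy i j with hi | rfl | hi
    · simp [wvec_of_lt hi, wvec_of_lt (hi.trans hjj'), hi.ne, (hi.trans hjj').ne]
    · simp [wvec_self, wvec_of_lt hjj', hjj'.ne]
    rcases lt_trichotomy i j' with hi' | rfl | hi'
    · exact absurd hi' (by rw [Fin.lt_def] at hi ⊢; omega)
    · simp [wvec_self, wvec_of_gt hi, hi.ne', h]; ring
    · simp [wvec_of_gt hi, wvec_of_gt hi', hi.ne', hi'.ne']
  simp only [D_sq, hterm, sum_add_distrib, sum_sub_distrib, sum_ite_eq', mem_univ, if_true]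

variable {p : Fin d → ℝ}

lemma D_pos (hp : ∀ i, 0 < p i) (j : Fin d) : 0 < D d j p := by
  refine Real.sqrt_pos.mpr (sum_pos' (fun i _ => by positivity) ⟨j, mem_univ j, ?_⟩)
  have := hp j
  rw [wvec_self]
  positivity

lemma G_pos (hp : ∀ i, 0 < p i) (j : Fin d) : 0 < G d p (wvec d j) :=
  div_pos (prod_pos fun i _ => hp i) (pow_pos (D_pos hp j) d)

lemma G_lt_G_of_D_lt (hp : ∀ i, 0 < p i) {j k : Fin d} (h : D d j p < D d k p) :
    G d p (wvec d k) < G d p (wvec d j) :=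
  div_lt_div_of_pos_left (prod_pos fun i _ => hp i) (pow_pos (D_pos hp j) d)
    (pow_lt_pow_left₀ h (D_pos hp j).le j.pos.ne')

lemma pos_update (hp : ∀ i, 0 < p i) (m : Fin d) {x : ℝ} (hx : 0 < x) :
    ∀ i, 0 < update p m x i :=
  (forall_update_iff p fun _ y => 0 < y).mpr ⟨hx, fun i _ => hp i⟩

lemma continuousAt_G (hp : ∀ i, 0 < p i) (j : Fin d) :
    ContinuousAt (fun q => G d q (wvec d j)) p :=
  ContinuousAt.div (by fun_prop)
    ((continuous_finsetSum _ fun i _ => by fun_prop).sqrt.pow d).continuousAt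
    (pow_pos (D_pos hp j) d).ne'

lemma eventually_lt_G_update (hp : ∀ i, 0 < p i) (m j : Fin d) {c : ℝ}
    (hc : c < G d p (wvec d j)) :
    ∀ᶠ x in 𝓝 (p m), c < G d (update p m x) (wvec d j) := by
  have hcont : ContinuousAt (fun x => G d (update p m x) (wvec d j)) (p m) :=
    (continuousAt_G hp j).comp_of_eq (continuous_const.update m continuous_id).continuousAt
      (update_eq_self m p)
  exact hcont.eventually (eventually_gt_nhds (by simpa using hc))

lemma G_update_of_wvec_eq_zero {j m : Fin d} (hw : wvec d j m = 0) (hpm : p m ≠ 0) (x : ℝ) :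
    G d (update p m x) (wvec d j) = x / p m * G d p (wvec d j) := by
  have hsum :
      ∀ i, (wvec d j i : ℝ) ^ 2 * update p m x i ^ 2 = (wvec d j i : ℝ) ^ 2 * p i ^ 2 := by
    intro i
    rcases eq_or_ne i m with rfl | hi
    · simp [hw]
    · rw [update_of_ne hi]
  unfold G
  rw [sum_congr rfl fun i _ => hsum i, prod_update_of_mem (mem_univ m),
    ← mul_prod_erase univ p (mem_univ m), sdiff_singleton_eq_erase]
  field_simp

lemma G_update (w : Fin d → ℕ) (m : Fin d) (x : ℝ) :
    G d (update p m x) w = (x * ∏ i ∈ univ.erase m, p i) /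
      √((w m : ℝ) ^ 2 * x ^ 2 + ∑ i ∈ univ.erase m, (w i : ℝ) ^ 2 * p i ^ 2) ^ d := by
  have hrest : ∑ i ∈ univ.erase m, (w i : ℝ) ^ 2 * update p m x i ^ 2
      = ∑ i ∈ univ.erase m, (w i : ℝ) ^ 2 * p i ^ 2 :=
    sum_congr rfl fun i hi => by rw [update_of_ne (ne_of_mem_erase hi)]
  unfold G
  rw [prod_update_of_mem (mem_univ m), sdiff_singleton_eq_erase,
    ← add_sum_erase _ _ (mem_univ m), update_self, hrest]

lemma D_sq_eq_of_isLocalMax (hp : ∀ i, 0 < p i) {j m : Fin d}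
    (h : IsLocalMax (fun x => G d (update p m x) (wvec d j)) (p m)) :
    D d j p ^ 2 = d * ((wvec d j m : ℝ) ^ 2 * p m ^ 2) := by
  have hsplit : (wvec d j m : ℝ) ^ 2 * p m ^ 2
      + ∑ i ∈ univ.erase m, (wvec d j i : ℝ) ^ 2 * p i ^ 2 = D d j p ^ 2 := by
    rw [D_sq]
    exact add_sum_erase _ (fun i => (wvec d j i : ℝ) ^ 2 * p i ^ 2) (mem_univ m)
  simp only [G_update] at h
  rw [← hsplit]
  exact eq_of_isLocalMax_mul_div_sqrt_pow d (prod_pos fun i _ => hp i).ne'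
    (hsplit ▸ pow_pos (D_pos hp j) 2) h

end

def IsMaximizer (d : ℕ) (p : Fin d → ℝ) : Prop :=
  (∀ i, 0 < p i) ∧ ∀ q : Fin d → ℝ, (∀ i, 0 < q i) → minG d q ≤ minG d p

namespace IsMaximizer

variable {d : ℕ} [NeZero d] {p : Fin d → ℝ}

lemma exists_G_le (hP : IsMaximizer d p) {q : Fin d → ℝ} (hq : ∀ i, 0 < q i) :
    ∃ j, G d q (wvec d j) ≤ minG d p := by
  obtain ⟨j, hj⟩ := Finite.exists_min fun j => G d q (wvec d j)
  exact ⟨j, (le_ciInf hj).trans (hP.2 q hq)⟩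

lemma D_le_D_zero (hP : IsMaximizer d p) (j : Fin d) : D d j p ≤ D d 0 p := by
  by_contra! hj
  have hG₀ : minG d p < G d p (wvec d 0) :=
    (minG_le p j).trans_lt (G_lt_G_of_D_lt hP.1 hj)
  obtain ⟨x, hx, hpx⟩ : ∃ x, minG d p < G d (update p 0 x) (wvec d 0) ∧ p 0 < x :=
    (((eventually_lt_G_update hP.1 0 0 hG₀).filter_mono nhdsWithin_le_nhds).and
      (self_mem_nhdsWithin (s := Set.Ioi (p 0)))).exists
  obtain ⟨k, hk⟩ := hP.exists_G_le (pos_update hP.1 0 ((hP.1 0).trans hpx))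
  rcases eq_or_ne k 0 with rfl | hk₀
  · exact hk.not_gt hx
  · rw [G_update_of_wvec_eq_zero (wvec_of_lt (Fin.pos_iff_ne_zero.mpr hk₀)) (hP.1 0).ne'] at hk
    have hgrow : G d p (wvec d k) < x / p 0 * G d p (wvec d k) :=
      lt_mul_of_one_lt_left (G_pos hP.1 k) ((one_lt_div (hP.1 0)).mpr hpx)
    exact hk.not_gt ((minG_le p k).trans_lt hgrow)

lemma isLocalMax_G_update (hP : IsMaximizer d p) {j₀ : Fin d}
    (h : ∀ j ≠ j₀, G d p (wvec d j₀) < G d p (wvec d j)) (m : Fin d) :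
    IsLocalMax (fun x => G d (update p m x) (wvec d j₀)) (p m) := by
  have hothers :
      ∀ᶠ x in 𝓝 (p m), ∀ j ≠ j₀, G d p (wvec d j₀) < G d (update p m x) (wvec d j) := by
    refine eventually_all.mpr fun j => ?_
    by_cases hj : j = j₀
    · exact .of_forall fun _ hne => absurd hj hne
    · exact (eventually_lt_G_update hP.1 m j (h j hj)).mono fun _ hx _ => hx
  filter_upwards [hothers, eventually_gt_nhds (hP.1 m)] with x hx hxpos
  obtain ⟨j, hj⟩ := hP.exists_G_le (pos_update hP.1 m hxpos)
  obtain rfl : j = j₀ := by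
    by_contra hne
    exact (hx j hne).not_ge (hj.trans (minG_le p j₀))
  simpa using hj.trans (minG_le p j)

end IsMaximizer

/-- If `p` is a maximizer, then some `k ∈ {2,…,d}` (0-based: `1 ≤ k`) satisfies
`D_k(p) = D_1(p)`. -/
theorem stmt6 (d : ℕ) (hd : 2 ≤ d) (p : Fin d → ℝ)
    (hp : ∀ i, 0 < p i)
    (hmax : ∀ q : Fin d → ℝ, (∀ i, 0 < q i) → minG d q ≤ minG d p) :
    ∃ k : Fin d, 1 ≤ (k : ℕ) ∧ D d k p = D d ⟨0, by omega⟩ p := by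
  have : NeZero d := ⟨by omega⟩
  have hP : IsMaximizer d p := ⟨hp, hmax⟩
  by_contra! hne
  let i₁ : Fin d := ⟨1, hd⟩
  have h01 : (0 : Fin d) < i₁ := Fin.mk_lt_mk.mpr one_pos
  have hlt : ∀ j ≠ 0, D d j p < D d 0 p := fun j hj =>
    (hP.D_le_D_zero j).lt_of_ne (hne j (Fin.pos_iff_ne_zero.mpr hj))
  have hloc := hP.isLocalMax_G_update fun j hj => G_lt_G_of_D_lt hp (hlt j hj)
  have h₀ := D_sq_eq_of_isLocalMax hp (hloc 0)
  have h₁ := D_sq_eq_of_isLocalMax hp (hloc i₁)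
  have hstep := D_succ_sq (p := p) (j := 0) (j' := i₁) rfl
  rw [wvec_self] at h₀
  rw [wvec_of_gt h01] at h₁
  have hD₁ := hlt i₁ h01.ne'
  norm_num at h₀ h₁ hstep
  have hp₀₁ : p 0 ^ 2 = p i₁ ^ 2 :=
    mul_left_cancel₀ (Nat.cast_ne_zero.mpr (NeZero.ne d)) (h₀.symm.trans h₁)
  have hsq := pow_lt_pow_left₀ hD₁ (D_pos hp i₁).le two_ne_zero
  linarith [pow_pos (hp i₁) 2]
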